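/- arXiv:2305.08974 — 5 statements merged into one kernel-verified Lean document; each statement's English description precedes it below -/
import Mathlib

section
/- Let A be a commutative ring, f, g ∈ A with f a nonzerodivisor, and suppose the ideal (f) defines a closed subscheme D ⊆ Spec A whose intersection with the principal open D(g) is scheme-theoretically dense in D, i.e. Ker(A → A_g/(f)) = (f). Let n ≥ 1 and consider the affine chart A' = (A[t]/(f - t g^n))/(g-torsion) of the blow-up of Spec A in the ideal (f, g^n). Then the kernel of A' → A'_g/(f A'_g) is the principal ideal generated by t; in other words, the strict transform of D in this chart is the Cartier divisor t = 0. -/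
/-!
Every element of `A'` is `a + t·y` with `a ∈ A`, and `t = f/gⁿ` lies in `f·A'_g`, so the kernel
contains `t` and it remains to treat constants `a`. Since `A'` has no `g`-torsion it embeds in
`B_g`, which maps to `A_g` by `t ↦ f/gⁿ`; hence a constant `a` in the kernel lies in `f·A_g`, so
`a = f·c` by density, and `f·c = t·gⁿ·c ∈ t·A'`.
-/

open Polynomial

/-- The ring `B = A[t]/(f - t·gⁿ)`. -/
abbrev Stmt3.B (A : Type*) [CommRing A] (f g : A) (n : ℕ) : Type _ :=
  A[X] ⧸ Ideal.span {(C f : A[X]) - X * C g ^ n}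

namespace Stmt3

variable (A : Type*) [CommRing A] (f g : A) (n : ℕ)

/-- The image of `g` in `B`. -/
noncomputable abbrev gB : B A f g n := Ideal.Quotient.mk _ (C g)

/-- The blow-up chart `A' = A[f/gⁿ] = (A[t]/(f - t·gⁿ))/(g-torsion)`; the `g`-torsion is the
kernel of the localization map `B → B_g`. -/
noncomputable abbrev A' : Type _ :=
  B A f g n ⧸ RingHom.ker (algebraMap (B A f g n) (Localization.Away (gB A f g n)))

noncomputable instance : CommRing (A' A f g n) := Ideal.Quotient.commRing _

/-- The image of `f` in `A'`. -/
noncomputable abbrev fA' : A' A f g n := Ideal.Quotient.mk _ (Ideal.Quotient.mk _ (C f))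

/-- The image of `g` in `A'`. -/
noncomputable abbrev gA' : A' A f g n := Ideal.Quotient.mk _ (gB A f g n)

/-- The image of `t` in `A'`. -/
noncomputable abbrev tA' : A' A f g n := Ideal.Quotient.mk _ (Ideal.Quotient.mk _ X)

end Stmt3

namespace Ideal

variable {A R : Type*} [CommRing A] [CommRing R]

abbrev awaySaturation (f g : A) : Ideal A :=
  (span {algebraMap A (Localization.Away g) f}).comap (algebraMap A (Localization.Away g))

theorem mem_awaySaturation_of_eq_mul_pow {f g t : A} {n : ℕ} (h : f = t * g ^ n) :
    t ∈ awaySaturation f g := by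
  rw [mem_comap, mem_span_singleton]
  refine ⟨IsLocalization.Away.invSelf g ^ n, ?_⟩
  rw [h, map_mul, map_pow, mul_assoc, ← mul_pow, IsLocalization.Away.mul_invSelf, one_pow,
    mul_one]

theorem comap_awaySaturation_le (ι : A →+* R) (f g : A) (ψ : R →+* Localization.Away g)
    (hψ : ψ.comp ι = algebraMap A (Localization.Away g)) :
    (awaySaturation (ι f) (ι g)).comap ι ≤ awaySaturation f g := by
  have hunit : IsUnit (ψ (ι g)) := by
    rw [← RingHom.comp_apply, hψ]
    exact IsLocalization.Away.algebraMap_isUnit g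
  have hψ' (a : A) : ψ (ι a) = algebraMap A _ a := RingHom.congr_fun hψ a
  intro a ha
  obtain ⟨z, hz⟩ := mem_span_singleton'.mp (mem_comap.mp (mem_comap.mp ha))
  have := congrArg (IsLocalization.Away.lift (ι g) hunit) hz
  rw [map_mul, IsLocalization.Away.lift_eq, IsLocalization.Away.lift_eq, hψ', hψ'] at this
  exact mem_span_singleton'.mpr ⟨_, this⟩

/-- `R` plays the role of the blow-up chart `A[f/gⁿ]`, with `t = f/gⁿ`. -/
theorem awaySaturation_eq_span_of_chart (ι : A →+* R) {f g : A} {t : R} {n : ℕ}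
    (hrel : ι f = t * ι g ^ n) (hdecomp : ∀ x, ∃ a y, x = ι a + t * y)
    (ψ : R →+* Localization.Away g) (hψ : ψ.comp ι = algebraMap A (Localization.Away g))
    (hdense : awaySaturation f g = span {f}) :
    awaySaturation (ι f) (ι g) = span {t} := by
  have ht := mem_awaySaturation_of_eq_mul_pow hrel
  refine le_antisymm (fun x hx => ?_) (span_le.mpr (Set.singleton_subset_iff.mpr ht))
  obtain ⟨a, y, rfl⟩ := hdecomp x
  have ha : ι a ∈ awaySaturation (ι f) (ι g) := by
    simpa using sub_mem hx (mul_mem_right y _ ht)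
  obtain ⟨c, rfl⟩ := mem_span_singleton.mp (hdense ▸ comap_awaySaturation_le ι f g ψ hψ ha)
  rw [map_mul, hrel, mul_assoc]
  exact add_mem (mul_mem_right _ _ (mem_span_singleton_self t))
    (mul_mem_right _ _ (mem_span_singleton_self t))

end Ideal

namespace Stmt3

variable (A : Type*) [CommRing A] (f g : A) (n : ℕ)

noncomputable def ofPolynomial : A[X] →+* A' A f g n :=
  (Ideal.Quotient.mk _).comp (Ideal.Quotient.mk _)

theorem ofPolynomial_surjective : Function.Surjective (ofPolynomial A f g n) :=
  Ideal.Quotient.mk_surjective.comp Ideal.Quotient.mk_surjective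

theorem fA'_eq_tA'_mul_gA'_pow : fA' A f g n = tA' A f g n * gA' A f g n ^ n := by
  have h : (Ideal.Quotient.mk (Ideal.span {(C f : A[X]) - X * C g ^ n}))
      ((C f : A[X]) - X * C g ^ n) = 0 :=
    Ideal.Quotient.eq_zero_iff_mem.mpr (Ideal.subset_span rfl)
  rw [map_sub, sub_eq_zero] at h
  simp only [fA', h, map_mul, map_pow]

theorem exists_eq_add_tA'_mul (x : A' A f g n) :
    ∃ a y, x = ofPolynomial A f g n (C a) + tA' A f g n * y := by
  obtain ⟨p, rfl⟩ := ofPolynomial_surjective A f g n x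
  refine ⟨p.coeff 0, ofPolynomial A f g n p.divX, ?_⟩
  conv_lhs => rw [← X_mul_divX_add p]
  rw [map_add, map_mul, add_comm]
  rfl

noncomputable def toAwayB : B A f g n →+* Localization.Away g :=
  Ideal.Quotient.lift _
    (eval₂RingHom (algebraMap A _) (algebraMap A _ f * IsLocalization.Away.invSelf g ^ n)) (by
      intro p hp
      obtain ⟨q, rfl⟩ := Ideal.mem_span_singleton'.mp hp
      have hinv : (IsLocalization.Away.invSelf g * algebraMap A (Localization.Away g) g) ^ n = 1 :=
        by rw [mul_comm, IsLocalization.Away.mul_invSelf, one_pow]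
      simp only [map_mul, map_sub, map_pow, coe_eval₂RingHom, eval₂_C, eval₂_X]
      linear_combination (-(q.eval₂ (algebraMap A _) _) * algebraMap A _ f) * hinv)

theorem toAwayB_C (a : A) : toAwayB A f g n (Ideal.Quotient.mk _ (C a)) = algebraMap A _ a := by
  simp [toAwayB]

noncomputable def toAway : A' A f g n →+* Localization.Away g :=
  (IsLocalization.Away.lift (gB A f g n) (g := toAwayB A f g n)
      (by rw [toAwayB_C]; exact IsLocalization.Away.algebraMap_isUnit g)).comp
    (RingHom.kerLift (algebraMap (B A f g n) (Localization.Away (gB A f g n))))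

theorem toAway_comp_ofPolynomial_comp_C :
    (toAway A f g n).comp ((ofPolynomial A f g n).comp C) = algebraMap A _ := by
  ext a
  simp [toAway, ofPolynomial, toAwayB_C]

end Stmt3

open Stmt3 in
theorem stmt3_general (A : Type*) [CommRing A] (f g : A)
    (n : ℕ)
    (hdense : RingHom.ker ((Ideal.Quotient.mk
        (Ideal.span {algebraMap A (Localization.Away g) f})).comp
        (algebraMap A (Localization.Away g))) = Ideal.span {f}) :
    RingHom.ker ((Ideal.Quotient.mk
        (Ideal.span {algebraMap (A' A f g n) (Localization.Away (gA' A f g n))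
          (fA' A f g n)})).comp
        (algebraMap (A' A f g n) (Localization.Away (gA' A f g n)))) =
      Ideal.span {tA' A f g n} := by
  rw [← RingHom.comap_ker, Ideal.mk_ker] at hdense ⊢
  exact Ideal.awaySaturation_eq_span_of_chart ((ofPolynomial A f g n).comp C)
    (fA'_eq_tA'_mul_gA'_pow A f g n) (exists_eq_add_tA'_mul A f g n) (toAway A f g n)
    (toAway_comp_ofPolynomial_comp_C A f g n) hdense

open Stmt3 in
/-- Let `f, g ∈ A`, `f` a nonzerodivisor, such that
`Ker (A → A_g/(f)) = (f)` (scheme-theoretic density of `D ∩ D(g)` in `D = V(f)`), and `n ≥ 1`.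
In the chart `A' = (A[t]/(f - t·gⁿ))/(g-torsion)` of the blow-up of `Spec A` in `(f, gⁿ)`,
the kernel of `A' → A'_g/(f)` is the principal ideal `(t)`: the strict transform of `D` is
the Cartier divisor `t = 0`. -/
theorem stmt3 (A : Type*) [CommRing A] (f g : A) (hf : f ∈ nonZeroDivisors A)
    (n : ℕ) (hn : 1 ≤ n)
    (hdense : RingHom.ker ((Ideal.Quotient.mk
        (Ideal.span {algebraMap A (Localization.Away g) f})).comp
        (algebraMap A (Localization.Away g))) = Ideal.span {f}) :
    RingHom.ker ((Ideal.Quotient.mk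
        (Ideal.span {algebraMap (A' A f g n) (Localization.Away (gA' A f g n))
          (fA' A f g n)})).comp
        (algebraMap (A' A f g n) (Localization.Away (gA' A f g n)))) =
      Ideal.span {tA' A f g n} :=
  stmt3_general A f g n hdense
end

section
/- Let R be a valuation ring, A a commutative ring, f ∈ A a nonzerodivisor such that A/fA is R-torsion-free, and M a finitely generated A-module. Then the dual module M^∨ = Hom_A(M, A) satisfies: (i) multiplication by f on M^∨ is injective; (ii) M^∨ is R-torsion-free; (iii) M^∨/f M^∨ is R-torsion-free. -/
/-!
A scalar acting injectively on `A` acts injectively on `Hom_A(M, A)`, which gives (i) and (ii).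
For (iii), `ϖ • φ = f • ψ` makes every value `φ m` divisible by `f` (as `A/fA` is
`R`-torsion-free); since `f` is a nonzerodivisor the quotients `φ m / f` are unique, hence
`A`-linear in `m`, and they form the required `ψ'`.
-/

section

variable {A M N : Type*} [CommRing A] [AddCommGroup M] [Module A M] [AddCommGroup N] [Module A N]
  {a : A}

theorem IsSMulRegular.linearMap (ha : IsSMulRegular N a) : IsSMulRegular (M →ₗ[A] N) a :=
  fun _ _ h ↦ LinearMap.ext fun m ↦ ha congr($h m)

theorem LinearMap.exists_eq_smul_of_forall_exists_eq_smul (ha : IsSMulRegular N a)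
    (φ : M →ₗ[A] N) (hφ : ∀ m, ∃ n, φ m = a • n) : ∃ ψ : M →ₗ[A] N, φ = a • ψ := by
  have hrange : ∀ m, φ m ∈ range (lsmul A N a) := fun m ↦ (hφ m).imp fun _ ↦ Eq.symm
  have hinj : Function.Injective (lsmul A N a) := ha
  exact ⟨codRestrictOfInjective φ _ hinj hrange,
    ext fun m ↦ (codRestrictOfInjective_comp_apply φ _ hinj hrange m).symm⟩

end

theorem stmt8_general (R : Type*) [CommRing R]
    (A : Type*) [CommRing A] [Algebra R A] [NoZeroSMulDivisors R A]
    (f : A) (hf : f ∈ nonZeroDivisors A)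
    (hAf : ∀ (r : R) (a : A), r ≠ 0 → (∃ b : A, r • a = f * b) → ∃ c : A, a = f * c)
    (M : Type*) [AddCommGroup M] [Module A M] :
    (∀ φ : Module.Dual A M, f • φ = 0 → φ = 0) ∧
    (∀ (r : R) (φ : Module.Dual A M), r ≠ 0 → algebraMap R A r • φ = 0 → φ = 0) ∧
    (∀ (r : R) (φ : Module.Dual A M), r ≠ 0 →
      (∃ ψ : Module.Dual A M, algebraMap R A r • φ = f • ψ) →
      ∃ ψ' : Module.Dual A M, φ = f • ψ') := by
  have hfA : IsSMulRegular A f :=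
    isSMulRegular_iff_right_eq_zero_of_smul.mpr (mem_nonZeroDivisors_iff.mp hf).1
  refine ⟨fun φ ↦ hfA.linearMap.right_eq_zero_of_smul, fun r φ hr hφ ↦ ?_, fun r φ hr ⟨ψ, hψ⟩ ↦ ?_⟩
  · have hrA : IsSMulRegular A (algebraMap R A r) :=
      isSMulRegular_iff_right_eq_zero_of_smul.mpr fun a h ↦
        (eq_zero_or_eq_zero_of_smul_eq_zero (by rwa [Algebra.smul_def])).resolve_left hr
    exact hrA.linearMap.right_eq_zero_of_smul hφ
  · refine LinearMap.exists_eq_smul_of_forall_exists_eq_smul hfA φ fun m ↦ hAf r (φ m) hr ⟨ψ m, ?_⟩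
    simpa [Algebra.smul_def] using congr($hψ m)

/-- Let `R` be a valuation ring, `A` an `R`-torsion-free `R`-algebra,
`f ∈ A` a nonzerodivisor such that `A/fA` is `R`-torsion-free, and `M` a finitely generated
`A`-module.  Then the dual `M^∨ = Hom_A(M, A)` satisfies: (i) multiplication by `f` on `M^∨`
is injective; (ii) `M^∨` is `R`-torsion-free; (iii) `M^∨/f·M^∨` is `R`-torsion-free. -/
theorem stmt8 (R : Type*) [CommRing R] [IsDomain R] [ValuationRing R]
    (A : Type*) [CommRing A] [Algebra R A] [NoZeroSMulDivisors R A]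
    (f : A) (hf : f ∈ nonZeroDivisors A)
    (hAf : ∀ (r : R) (a : A), r ≠ 0 → (∃ b : A, r • a = f * b) → ∃ c : A, a = f * c)
    (M : Type*) [AddCommGroup M] [Module A M] [Module.Finite A M] :
    (∀ φ : Module.Dual A M, f • φ = 0 → φ = 0) ∧
    (∀ (r : R) (φ : Module.Dual A M), r ≠ 0 → algebraMap R A r • φ = 0 → φ = 0) ∧
    (∀ (r : R) (φ : Module.Dual A M), r ≠ 0 →
      (∃ ψ : Module.Dual A M, algebraMap R A r • φ = f • ψ) →
      ∃ ψ' : Module.Dual A M, φ = f • ψ') :=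
  stmt8_general R A f hf hAf M
end

section
/- Let R be a valuation ring with fraction field K, A an R-algebra, f ∈ A, N a finitely generated A-module which is R-torsion-free and on which multiplication by f is injective with N/fN R-torsion-free, and M ⊆ N an A-submodule. Define M^sat := Ker(N → (N/M) ⊗_A (A ⊗_R K)[1/f]). Then M^sat is R-torsion-free, multiplication by f on M^sat is injective, N/M^sat is R-torsion-free, M^sat/f·M^sat is R-torsion-free, and M ⊗_A (A⊗_R K)[1/f] = M^sat ⊗_A (A⊗_R K)[1/f]. -/
namespace Stmt9

variable (R : Type*) [CommRing R] (A : Type*) [CommRing A] [Algebra R A] (f : A)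

/-- The multiplicative subset of `A` generated by `f` and the (images of) nonzero elements
of `R`; localizing `A` at it computes `(A ⊗_R K)[1/f]` for `K = Frac R`. -/
def T : Submonoid A :=
  Submonoid.closure ({f} ∪ (algebraMap R A '' {r : R | r ≠ 0}))

variable {N : Type*} [AddCommGroup N] [Module A N] (M : Submodule A N)

/-- The saturation `M^sat = Ker (N → (N/M) ⊗_A (A ⊗_R K)[1/f])`. -/
noncomputable def sat : Submodule A N :=
  LinearMap.ker ((LocalizedModule.mkLinearMap (T R A f) (N ⧸ M)).comp M.mkQ)

end Stmt9

namespace Stmt9Aux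

open Stmt9

lemma mem_sat {R : Type*} [CommRing R] {A : Type*} [CommRing A] [Algebra R A] {f : A}
    {N : Type*} [AddCommGroup N] [Module A N] {M : Submodule A N} {x : N} :
    x ∈ sat R A f M ↔ ∃ t ∈ T R A f, t • x ∈ M := by
  rw [sat, LinearMap.mem_ker, LinearMap.comp_apply, LocalizedModule.mkLinearMap_apply,
    show (0 : LocalizedModule (T R A f) (N ⧸ M)) = LocalizedModule.mk 0 1 from
      (LocalizedModule.zero_mk 1).symm, LocalizedModule.mk_eq]
  constructor
  · rintro ⟨t, ht⟩
    refine ⟨(t : A), t.2, ?_⟩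
    simp only [one_smul, smul_zero] at ht
    rwa [Submonoid.smul_def, ← map_smul, Submodule.mkQ_apply,
      Submodule.Quotient.mk_eq_zero] at ht
  · rintro ⟨t, htT, ht⟩
    refine ⟨⟨t, htT⟩, ?_⟩
    simp only [one_smul, smul_zero]
    rwa [Submonoid.smul_def, ← map_smul, Submodule.mkQ_apply, Submodule.Quotient.mk_eq_zero]

lemma f_mem_T {R : Type*} [CommRing R] {A : Type*} [CommRing A] [Algebra R A] (f : A) :
    f ∈ T R A f :=
  Submonoid.subset_closure (Or.inl rfl)

lemma algebraMap_mem_T {R : Type*} [CommRing R] {A : Type*} [CommRing A] [Algebra R A] (f : A)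
    {r : R} (hr : r ≠ 0) : algebraMap R A r ∈ T R A f :=
  Submonoid.subset_closure (Or.inr ⟨r, hr, rfl⟩)

/-- Every element of `T` has the form `f ^ k * algebraMap R A r` with `r ≠ 0`. -/
lemma T_struct {R : Type*} [CommRing R] [IsDomain R] {A : Type*} [CommRing A] [Algebra R A]
    {f : A} {t : A} (ht : t ∈ T R A f) :
    ∃ (k : ℕ) (r : R), r ≠ 0 ∧ t = f ^ k * algebraMap R A r := by
  induction ht using Submonoid.closure_induction with
  | mem a ha =>
    rcases ha with ha | ⟨r, hr, rfl⟩
    · exact ⟨1, 1, one_ne_zero, by simp [Set.mem_singleton_iff.mp ha]⟩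
    · exact ⟨0, r, hr, by simp⟩
  | one => exact ⟨0, 1, one_ne_zero, by simp⟩
  | mul a b _ _ iha ihb =>
    obtain ⟨k, r, hr, rfl⟩ := iha
    obtain ⟨l, s, hs, rfl⟩ := ihb
    exact ⟨k + l, r * s, mul_ne_zero hr hs, by rw [map_mul, pow_add]; ring⟩

end Stmt9Aux

open Stmt9 Stmt9Aux in
theorem stmt9 (R K : Type*) [CommRing R] [IsDomain R] [ValuationRing R]
    [Field K] [Algebra R K] [IsFractionRing R K]
    (A : Type*) [CommRing A] [Algebra R A] (f : A)
    (N : Type*) [AddCommGroup N] [Module A N] [Module.Finite A N]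
    (hNtf : ∀ (r : R) (x : N), r ≠ 0 → algebraMap R A r • x = 0 → x = 0)
    (hfN : ∀ x : N, f • x = 0 → x = 0)
    (hNf : ∀ (r : R) (x : N), r ≠ 0 → (∃ y : N, algebraMap R A r • x = f • y) →
      ∃ z : N, x = f • z)
    (M : Submodule A N) :
    (∀ (r : R) (x : N), x ∈ sat R A f M → r ≠ 0 → algebraMap R A r • x = 0 → x = 0) ∧
    (∀ x ∈ sat R A f M, f • x = 0 → x = 0) ∧
    (∀ (r : R) (x : N), r ≠ 0 → algebraMap R A r • x ∈ sat R A f M → x ∈ sat R A f M) ∧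
    (∀ (r : R), r ≠ 0 → ∀ x ∈ sat R A f M,
      (∃ y ∈ sat R A f M, algebraMap R A r • x = f • y) →
      ∃ z ∈ sat R A f M, x = f • z) ∧
    (M ≤ sat R A f M ∧ ∀ x ∈ sat R A f M, ∃ t ∈ T R A f, t • x ∈ M) := by
  -- saturation property: if t ∈ T and t • x ∈ sat then x ∈ sat
  have hsatT : ∀ (t : A), t ∈ T R A f → ∀ x : N, t • x ∈ sat R A f M → x ∈ sat R A f M := by
    intro t htT x hx
    rw [mem_sat] at hx ⊢
    obtain ⟨s, hsT, hs⟩ := hx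
    exact ⟨s * t, mul_mem hsT htT, by rwa [mul_smul]⟩
  refine ⟨fun r x _ hr h => hNtf r x hr h, fun x _ h => hfN x h, ?_, ?_, ?_, ?_⟩
  · intro r x hr hx
    exact hsatT _ (algebraMap_mem_T f hr) x hx
  · intro r hr x hx ⟨y, hy, hxy⟩
    obtain ⟨z, hz⟩ := hNf r x hr ⟨y, hxy⟩
    refine ⟨z, ?_, hz⟩
    exact hsatT f (f_mem_T f) z (hz ▸ hx)
  · intro x hx
    exact mem_sat.mpr ⟨1, one_mem _, by simpa⟩
  · intro x hx
    exact mem_sat.mp hx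
end

section
/- Let X be a scheme of finite type over a Noetherian affine scheme S = Spec R. Then there exists a finitely generated R-subalgebra B ⊆ Γ(X, O_X) such that, denoting q : X → Spec B the induced morphism and σ_X : X → Spec Γ(X, O_X) the canonical morphism, for all x₁, x₂ ∈ X one has σ_X(x₁) = σ_X(x₂) if and only if q(x₁) = q(x₂). -/
/-!
For `h ∈ Γ(X, 𝒪_X)` let `U_h ⊆ X ×_S X` be the open where `pr₁^* h - pr₂^* h` is invertible.
Since `X ×_S X` is Noetherian, finitely many `U_{h_i}` already cover `⋃_h U_h`; take
`B = R[h_1, …, h_n]`. If `q x₁ = q x₂`, choose `z ∈ X ×_B X` over `(x₁, x₂)`. Its image in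
`X ×_S X` avoids every `U_{h_i}`, because the `h_i` come from `B`, hence avoids every `U_h`.
So each global function vanishes at `x₁` iff it vanishes at `x₂`, i.e. `σ_X x₁ = σ_X x₂`.
-/

open CategoryTheory AlgebraicGeometry TopologicalSpace CategoryTheory.Limits

namespace AlgebraicGeometry

lemma noetherianSpace_of_locallyOfFiniteType {R : CommRingCat} [IsNoetherianRing R] {X : Scheme}
    (f : X ⟶ Spec R) [LocallyOfFiniteType f] [QuasiCompact f] : NoetherianSpace X := by
  have := LocallyOfFiniteType.isLocallyNoetherian f
  have := QuasiCompact.compactSpace_of_compactSpace f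
  have : IsNoetherian X := ⟨⟩
  infer_instance

namespace Scheme

lemma toSpecΓ_base_eq_iff (X : Scheme) (x₁ x₂ : X) :
    X.toSpecΓ.base x₁ = X.toSpecΓ.base x₂ ↔
      ∀ h : Γ(X, ⊤), x₁ ∈ X.basicOpen h ↔ x₂ ∈ X.basicOpen h := by
  refine (PrimeSpectrum.ext_iff.trans Ideal.ext_iff).trans (forall_congr' fun h => ?_)
  rw [← X.toSpecΓ_preimage_basicOpen]
  exact not_iff_not.symm

lemma toSpecΓ_comp_SpecMap_ΓSpecIso_inv_comp_appTop {R : CommRingCat} {X : Scheme}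
    (f : X ⟶ Spec R) : X.toSpecΓ ≫ Spec.map ((ΓSpecIso R).inv ≫ f.appTop) = f := by
  rw [Spec.map_comp, ← toSpecΓ_naturality_assoc, ← SpecMap_ΓSpecIso_hom, ← Spec.map_comp,
    Iso.inv_hom_id, Spec.map_id, Category.comp_id]

section basicOpenSub

variable {V W X Y : Scheme} (p₁ p₂ : W ⟶ X)

/-- The open `U_h`: the points of `W` where `p₁^* h` and `p₂^* h` have different values. -/
def basicOpenSub (h : Γ(X, ⊤)) : W.Opens :=
  W.basicOpen (p₁.appTop h - p₂.appTop h)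

lemma preimage_basicOpenSub (g : V ⟶ W) (h : Γ(X, ⊤)) :
    g ⁻¹ᵁ basicOpenSub p₁ p₂ h = basicOpenSub (g ≫ p₁) (g ≫ p₂) h := by
  rw [basicOpenSub, basicOpenSub, preimage_basicOpen_top, map_sub, Hom.comp_appTop,
    Hom.comp_appTop]
  rfl

lemma basicOpenSub_appTop_eq_bot {q : X ⟶ Y} (hq : p₁ ≫ q = p₂ ≫ q) (b : Γ(Y, ⊤)) :
    basicOpenSub p₁ p₂ (q.appTop b) = ⊥ := by
  rw [basicOpenSub, ← CommRingCat.comp_apply, ← CommRingCat.comp_apply, ← Hom.comp_appTop,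
    ← Hom.comp_appTop, hq, sub_self, basicOpen_zero]

lemma mem_basicOpen_iff_of_notMem_basicOpenSub {w : W} {h : Γ(X, ⊤)}
    (hw : w ∉ basicOpenSub p₁ p₂ h) :
    p₁.base w ∈ X.basicOpen h ↔ p₂.base w ∈ X.basicOpen h := by
  rw [basicOpenSub, ← evaluation_eq_zero_iff_notMem_basicOpen (U := ⊤) W w trivial, map_sub,
    sub_eq_zero] at hw
  rw [← evaluation_ne_zero_iff_mem_basicOpen (U := ⊤) X _ trivial h,
    ← evaluation_ne_zero_iff_mem_basicOpen (U := ⊤) X _ trivial h,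
    ← map_ne_zero_iff _ (p₁.residueFieldMap w).hom.injective,
    ← map_ne_zero_iff _ (p₂.residueFieldMap w).hom.injective,
    Γevaluation_naturality_apply, Γevaluation_naturality_apply, hw]

lemma exists_finset_basicOpenSub_subset [NoetherianSpace W] :
    ∃ t : Finset Γ(X, ⊤), ∀ h, (basicOpenSub p₁ p₂ h : Set W) ⊆ ⋃ i ∈ t, basicOpenSub p₁ p₂ i := by
  obtain ⟨t, ht⟩ := (NoetherianSpace.isCompact (⋃ h, (basicOpenSub p₁ p₂ h : Set W)))
    |>.elim_finite_subcover (basicOpenSub p₁ p₂ ·) (basicOpenSub p₁ p₂ · |>.isOpen) le_rfl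
  exact ⟨t, fun h => (Set.subset_iUnion _ h).trans ht⟩

lemma basicOpenSub_comp_eq_bot {t : Set Γ(X, ⊤)}
    (ht : ∀ h, (basicOpenSub p₁ p₂ h : Set W) ⊆ ⋃ i ∈ t, basicOpenSub p₁ p₂ i) (g : V ⟶ W)
    (hg : ∀ i ∈ t, basicOpenSub (g ≫ p₁) (g ≫ p₂) i = ⊥) (h : Γ(X, ⊤)) :
    basicOpenSub (g ≫ p₁) (g ≫ p₂) h = ⊥ := by
  refine eq_bot_iff.mpr fun v hv => ?_
  rw [← preimage_basicOpenSub] at hv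
  obtain ⟨i, hi, hvi⟩ := Set.mem_iUnion₂.mp (ht h hv)
  have : v ∈ g ⁻¹ᵁ basicOpenSub p₁ p₂ i := hvi
  rwa [preimage_basicOpenSub, hg i hi] at this

end basicOpenSub

end Scheme

end AlgebraicGeometry

/-- Let `X` be a scheme of finite type over a Noetherian affine scheme
`Spec R`.  Then there is a finitely generated `R`-subalgebra `B ⊆ Γ(X, O_X)` such that the
induced morphism `q : X → Spec B` separates points exactly as well as the canonical morphism
`σ_X : X → Spec Γ(X, O_X)` does: `σ_X x₁ = σ_X x₂ ↔ q x₁ = q x₂`. -/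
theorem stmt12 (R : CommRingCat) [IsNoetherianRing R] (X : Scheme) (f : X ⟶ Spec R)
    [LocallyOfFiniteType f] [QuasiCompact f] :
    letI : Algebra R Γ(X, ⊤) :=
      RingHom.toAlgebra ((Scheme.ΓSpecIso R).inv ≫ Scheme.Hom.appTop f).hom
    ∃ B : Subalgebra R Γ(X, ⊤), B.FG ∧
      ∀ x₁ x₂ : X,
        ((Scheme.toSpecΓ X).base x₁ = (Scheme.toSpecΓ X).base x₂ ↔
          (Scheme.toSpecΓ X ≫ Spec.map (CommRingCat.ofHom B.val.toRingHom)).base x₁ =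
          (Scheme.toSpecΓ X ≫ Spec.map (CommRingCat.ofHom B.val.toRingHom)).base x₂) := by
  let : Algebra R Γ(X, ⊤) := RingHom.toAlgebra ((Scheme.ΓSpecIso R).inv ≫ f.appTop).hom
  have := noetherianSpace_of_locallyOfFiniteType (pullback.fst f f ≫ f)
  obtain ⟨t, ht⟩ := Scheme.exists_finset_basicOpenSub_subset (pullback.fst f f) (pullback.snd f f)
  let B := Algebra.adjoin R (t : Set Γ(X, ⊤))
  refine ⟨B, Subalgebra.fg_adjoin_finset t, fun x₁ x₂ => ⟨fun h => by simp [h], fun hq => ?_⟩⟩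
  set q := X.toSpecΓ ≫ Spec.map (CommRingCat.ofHom B.val.toRingHom)
  obtain ⟨z, rfl, rfl⟩ := Scheme.Pullback.exists_preimage_pullback x₁ x₂ hq
  have hfq : q ≫ Spec.map (CommRingCat.ofHom (algebraMap R B)) = f := by
    rw [Category.assoc, ← Spec.map_comp]
    exact Scheme.toSpecΓ_comp_SpecMap_ΓSpecIso_inv_comp_appTop f
  let ψ : pullback q q ⟶ pullback f f :=
    pullback.lift (pullback.fst q q) (pullback.snd q q) (by rw [← hfq, pullback.condition_assoc])
  have hψ₁ : ψ ≫ pullback.fst f f = pullback.fst q q := pullback.lift_fst _ _ _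
  have hψ₂ : ψ ≫ pullback.snd f f = pullback.snd q q := pullback.lift_snd _ _ _
  have hB (i) (hi : i ∈ (t : Set Γ(X, ⊤))) :
      Scheme.basicOpenSub (pullback.fst q q) (pullback.snd q q) i = ⊥ := by
    simpa [q] using Scheme.basicOpenSub_appTop_eq_bot _ _ (pullback.condition (f := q) (g := q))
      ((Scheme.ΓSpecIso (.of B)).inv (⟨i, Algebra.subset_adjoin hi⟩ : B))
  have hsep := Scheme.basicOpenSub_comp_eq_bot _ _ ht ψ (by rwa [hψ₁, hψ₂])
  rw [hψ₁, hψ₂] at hsep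
  exact (Scheme.toSpecΓ_base_eq_iff X _ _).mpr fun h =>
    Scheme.mem_basicOpen_iff_of_notMem_basicOpenSub _ _ (by rw [hsep h]; exact id)
end

section
/- Let X be an integral Noetherian scheme and s a non-generic point of Spec Γ(X, O_X). Then there exists an integral closed subscheme Y ⊊ X such that s lies in the closure of σ_X(Y), where σ_X : X → Spec Γ(X, O_X) is the canonical morphism. -/
/-!
Pick `0 ≠ f ∈ s`. On a qcqs scheme `X`, `Γ(X, D(g))` is the localization `Γ(X, ⊤)_g`, so an
inclusion `D_X(g) ⊆ D_X(f)` makes `f` invertible in `Γ(X, ⊤)_g`, i.e. `D(g) ⊆ D(f)` in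
`Spec Γ(X, ⊤)`. Hence the closure of `σ_X(V_X(f))` is all of `V(f) ∋ s`. As `X` is Noetherian,
`V_X(f)` is a finite union of irreducible closed sets, and `s` lies in the closure of the image of
one of them, which is proper because `f ≠ 0` on the reduced scheme `X`.
-/

open CategoryTheory AlgebraicGeometry

theorem TopologicalSpace.NoetherianSpace.exists_isIrreducible_subset_mem_closure_image
    {α β : Type*} [TopologicalSpace α] [NoetherianSpace α] [TopologicalSpace β] (f : α → β)
    {Z : Set α} (hZ : IsClosed Z) {y : β} (hy : y ∈ closure (f '' Z)) :
    ∃ W ⊆ Z, IsClosed W ∧ IsIrreducible W ∧ y ∈ closure (f '' W) := by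
  obtain ⟨S, hS, hZS⟩ := exists_finset_irreducible ⟨Z, hZ⟩
  have hZ_eq : Z = ⋃ W ∈ S, (W : Set α) := by
    simpa [Closeds.coe_finset_sup] using congrArg SetLike.coe hZS
  rw [hZ_eq, Set.image_iUnion₂, Finset.closure_biUnion, Set.mem_iUnion₂] at hy
  obtain ⟨W, hW, hyW⟩ := hy
  exact ⟨W, hZ_eq ▸ Set.subset_biUnion_of_mem hW, W.isClosed, hS ⟨W, hW⟩, hyW⟩

namespace AlgebraicGeometry.Scheme

lemma zeroLocus_singleton_eq_univ_iff {X : Scheme} [IsReduced X] {U : X.Opens} (f : Γ(X, U)) :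
    X.zeroLocus {f} = Set.univ ↔ f = 0 := by
  rw [← basicOpen_eq_bot_iff, zeroLocus_singleton, Set.compl_univ_iff,
    TopologicalSpace.Opens.coe_eq_empty]

section QuasiCompactQuasiSeparated

variable {X : Scheme} [CompactSpace X] [QuasiSeparatedSpace X]

lemma primeSpectrum_basicOpen_le_of_basicOpen_le {f g : Γ(X, ⊤)}
    (h : X.basicOpen g ≤ X.basicOpen f) :
    PrimeSpectrum.basicOpen g ≤ PrimeSpectrum.basicOpen f := by
  have := isLocalization_basicOpen_of_qcqs isCompact_univ isQuasiSeparated_univ g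
  rw [PrimeSpectrum.basicOpen_le_basicOpen_iff_algebraMap_isUnit (S := Γ(X, X.basicOpen g))]
  convert (X.toRingedSpace.isUnit_res_basicOpen f).map (X.presheaf.map (homOfLE h).op).hom
  exact X.presheaf.map_comp_apply (homOfLE (X.basicOpen_le f)).op (homOfLE h).op f

lemma closure_image_toSpecΓ_zeroLocus_singleton (f : Γ(X, ⊤)) :
    closure (X.toSpecΓ.base '' X.zeroLocus {f}) = PrimeSpectrum.zeroLocus {f} := by
  refine subset_antisymm ?_ fun s hs ↦ ?_
  · refine (PrimeSpectrum.isClosed_zeroLocus {f}).closure_subset_iff.mpr ?_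
    rintro _ ⟨x, hx, rfl⟩
    rwa [← toSpecΓ_preimage_zeroLocus] at hx
  refine PrimeSpectrum.isTopologicalBasis_basic_opens.mem_closure_iff.mpr ?_
  rintro _ ⟨g, rfl⟩ hgs
  by_contra hdisj
  have hle : X.basicOpen g ≤ X.basicOpen f := fun x hx ↦ by
    by_contra hxf
    have hx' : x ∈ X.toSpecΓ ⁻¹ᵁ PrimeSpectrum.basicOpen g := by rwa [toSpecΓ_preimage_basicOpen]
    exact hdisj ⟨X.toSpecΓ x, hx', x, by rwa [zeroLocus_singleton], rfl⟩
  exact primeSpectrum_basicOpen_le_of_basicOpen_le hle hgs (hs rfl)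

end QuasiCompactQuasiSeparated

end AlgebraicGeometry.Scheme

/-- Let `X` be an integral Noetherian scheme and `s` a non-generic point of
`Spec Γ(X, O_X)` (i.e. a nonzero prime of the domain `Γ(X, O_X)`).  Then there is an integral
closed subscheme `Y ⊊ X` (an irreducible proper closed subset) such that `s` lies in the
closure of `σ_X(Y)`. -/
theorem stmt15 (X : Scheme) [IsIntegral X] [IsNoetherian X]
    (s : PrimeSpectrum Γ(X, ⊤)) (hs : s.asIdeal ≠ ⊥) :
    ∃ Z : Set X, IsClosed Z ∧ IsIrreducible Z ∧ Z ≠ Set.univ ∧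
      (s : PrimeSpectrum Γ(X, ⊤)) ∈ closure ((Scheme.toSpecΓ X).base '' Z) := by
  obtain ⟨f, hfs, hf0⟩ := Submodule.exists_mem_ne_zero_of_ne_bot hs
  have hs_mem : s ∈ closure (X.toSpecΓ.base '' X.zeroLocus {f}) := by
    rw [Scheme.closure_image_toSpecΓ_zeroLocus_singleton]
    exact Set.singleton_subset_iff.mpr hfs
  obtain ⟨Z, hZf, hZ, hZ_irr, hsZ⟩ :=
    TopologicalSpace.NoetherianSpace.exists_isIrreducible_subset_mem_closure_image _
      (X.zeroLocus_isClosed {f}) hs_mem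
  refine ⟨Z, hZ, hZ_irr, fun hZ_univ ↦ hf0 ?_, hsZ⟩
  exact (Scheme.zeroLocus_singleton_eq_univ_iff f).mp (Set.eq_univ_of_univ_subset (hZ_univ ▸ hZf))
end
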